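/- Let n ≥ 2, θ ∈ ℝ, and fix ζ ∈ 𝕊 (the unit sphere). The function u(x) := (1-|x|²)^{1+2θ} / |x-ζ|^{n+2θ}, x ∈ 𝔹, satisfies L_θ[u] = 0 on 𝔹. Consequently, for any constant c, the kernel x ↦ c·(1-|x|²)^{1+2θ}/|x-ζ|^{n+2θ} also satisfies L_θ[u] = 0 on 𝔹. -/

import Mathlib

open MeasureTheory
open scoped BigOperators ENNReal Classical

noncomputable section

/-- Euclidean space `ℝⁿ`. -/
abbrev E (n : ℕ) := EuclideanSpace ℝ (Fin n)

/-- The open unit ball of `ℝⁿ`. -/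
def unitBall (n : ℕ) : Set (E n) := Metric.ball 0 1

/-- The Laplacian `Δf = ∑ ∂²f/∂xᵢ²`. -/
def lap {n : ℕ} (f : E n → ℂ) (x : E n) : ℂ :=
  ∑ i : Fin n,
    fderiv ℝ (fun y => fderiv ℝ f y (EuclideanSpace.single i 1)) x (EuclideanSpace.single i 1)

/-- The `N`-th iterate `Δ^N` of the Laplacian. -/
def lapIter {n : ℕ} (N : ℕ) (f : E n → ℂ) : E n → ℂ := lap^[N] f

/-- The radial derivative `R[u](x) = x ⋅ ∇u(x)`. -/
def radialDeriv {n : ℕ} (f : E n → ℂ) (x : E n) : ℂ := fderiv ℝ f x x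

/-- The operator `L_θ[u] = (1-|x|²) Δu + 4θ R[u] + 2θ(n-2-2θ) u`. -/
def Lop {n : ℕ} (θ : ℝ) (f : E n → ℂ) (x : E n) : ℂ :=
  ((1 - ‖x‖ ^ 2 : ℝ) : ℂ) * lap f x + ((4 * θ : ℝ) : ℂ) * radialDeriv f x
    + ((2 * θ * ((n : ℝ) - 2 - 2 * θ) : ℝ) : ℂ) * f x

/-- The multiplication operator `M^j[u](x) = (1-|x|²)^j u(x)` for integer `j`. -/
def Mnat {n : ℕ} (j : ℕ) (f : E n → ℂ) (x : E n) : ℂ :=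
  (((1 - ‖x‖ ^ 2) ^ j : ℝ) : ℂ) * f x

/-- The multiplication operator `M^λ[u](x) = (1-|x|²)^λ u(x)` for real `λ`. -/
def Mr {n : ℕ} (lam : ℝ) (f : E n → ℂ) (x : E n) : ℂ :=
  (((1 - ‖x‖ ^ 2) ^ lam : ℝ) : ℂ) * f x

/-- `u` is `N`-harmonic on the unit ball: `u` is `C^{2N}` there and `Δ^N u = 0`. -/
def NHarm (n N : ℕ) (u : E n → ℂ) : Prop :=
  ContDiffOn ℝ (2 * N : ℕ) u (unitBall n) ∧ ∀ x ∈ unitBall n, lapIter N u x = 0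

/-- `‖u‖_{p,α}^p = ∫_𝔹 |u|^p (1-|x|²)^α dV`, as a lower integral. -/
def wInt (n : ℕ) (p α : ℝ) (u : E n → ℂ) : ℝ≥0∞ :=
  ∫⁻ x in unitBall n, ENNReal.ofReal (‖u x‖ ^ p * (1 - ‖x‖ ^ 2) ^ α)

/-- Membership in `PH^p_{N,α}(𝔹)`. -/
def memPH (n N : ℕ) (p α : ℝ) (u : E n → ℂ) : Prop :=
  NHarm n N u ∧ wInt n p α u < ⊤

/-- The quantities `b_{j,N}(p)`. -/
def bCoef (n N j : ℕ) (p : ℝ) : ℝ :=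
  if j = 0 then -1 - ((N : ℝ) - 1) * p
  else max (-1 - ((N : ℝ) + (j : ℝ) - 1) * p) (-(n : ℝ) - ((N : ℝ) - (j : ℝ) - (n : ℝ) + 1) * p)

/-- The quantities `a_{j,N}(p)`. -/
def aCoef (n N j : ℕ) (p : ℝ) : ℝ :=
  min (bCoef n N j p) (-1 - ((N : ℝ) - (j : ℝ)) * p)

end

/-!
Write `u = S ^ p * T ^ q` with `S = 1 - |x|²`, `T = |x - ζ|²`, `p = 1 + 2θ`, `q = -(n + 2θ)/2`.
Then `∇u = u g` with `g = p ∇S / S + q ∇T / T` the logarithmic gradient, and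
`Δu = u (|g|² + div g)`, `R[u] = u ⟪g, x⟫`. Since `|ζ| = 1`, `⟪x - ζ, x⟫ = (T - S)/2`, so
`L_θ[u] / u` is a rational function of `|x|²` and `T` alone, which vanishes identically for
these exponents. Linearity of `L_θ` over `ℂ` gives the constant multiples.
-/

open scoped RealInnerProductSpace
open Topology

section Calculus

variable {F : Type*} [NormedAddCommGroup F] [InnerProductSpace ℝ F]

lemma hasFDerivAt_one_sub_norm_sq (x : F) :
    HasFDerivAt (fun y : F => 1 - ‖y‖ ^ 2) (-(2 • innerSL ℝ x)) x := by
  simpa using (hasStrictFDerivAt_norm_sq x).hasFDerivAt.const_sub 1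

lemma hasFDerivAt_norm_sub_sq (ζ x : F) :
    HasFDerivAt (fun y : F => ‖y - ζ‖ ^ 2) (2 • innerSL ℝ (x - ζ)) x := by
  simpa using ((hasFDerivAt_id x).sub_const ζ).norm_sq

lemma inner_sub_self_eq_of_norm_eq_one {ζ : F} (hζ : ‖ζ‖ = 1) (x : F) :
    ⟪x - ζ, x⟫ = (‖x - ζ‖ ^ 2 - (1 - ‖x‖ ^ 2)) / 2 := by
  rw [norm_sub_sq_real, inner_sub_left, real_inner_self_eq_norm_sq, real_inner_comm, hζ]
  ring

end Calculus

section Operators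

variable {n : ℕ}

lemma fderiv_const_mul_complex (c : ℂ) (f : E n → ℂ) :
    fderiv ℝ (fun y => c * f y) = c • fderiv ℝ f :=
  fderiv_const_smul_field (f := f) c

lemma lap_const_mul (c : ℂ) (f : E n → ℂ) (x : E n) :
    lap (fun y => c * f y) x = c * lap f x := by
  simp only [lap, fderiv_const_mul_complex, smul_apply, Pi.smul_apply, smul_eq_mul,
    Finset.mul_sum]

lemma Lop_const_mul (θ : ℝ) (c : ℂ) (f : E n → ℂ) (x : E n) :
    Lop θ (fun y => c * f y) x = c * Lop θ f x := by
  simp only [Lop, lap_const_mul, radialDeriv, fderiv_const_mul_complex, Pi.smul_apply, smul_apply,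
    smul_eq_mul]
  ring

lemma HasFDerivAt.ofReal {g : E n → ℝ} {D : E n →L[ℝ] ℝ} {x : E n} (hg : HasFDerivAt g D x) :
    HasFDerivAt (fun y => (g y : ℂ)) (Complex.ofRealCLM.comp D) x :=
  Complex.ofRealCLM.hasFDerivAt.comp x hg

lemma lap_ofReal_eq_sum {g : E n → ℝ} {x : E n} {D H : E n → E n →L[ℝ] ℝ}
    (hD : ∀ᶠ y in 𝓝 x, HasFDerivAt g (D y) y) (hH : ∀ v, HasFDerivAt (fun y => D y v) (H v) x) :
    lap (fun y => (g y : ℂ)) x =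
      ((∑ i, H (EuclideanSpace.single i 1) (EuclideanSpace.single i 1) : ℝ) : ℂ) := by
  push_cast
  refine Finset.sum_congr rfl fun i _ => ?_
  have hpartial : (fun y => fderiv ℝ (fun y => (g y : ℂ)) y (EuclideanSpace.single i 1))
      =ᶠ[𝓝 x] fun y => (D y (EuclideanSpace.single i 1) : ℂ) :=
    hD.mono fun y hy => by simp [hy.ofReal.fderiv]
  simp [hpartial.fderiv_eq, (hH _).ofReal.fderiv]

lemma radialDeriv_ofReal {g : E n → ℝ} {x : E n} {D : E n →L[ℝ] ℝ} (hD : HasFDerivAt g D x) :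
    radialDeriv (fun y => (g y : ℂ)) x = D x := by
  simp [radialDeriv, hD.ofReal.fderiv]

lemma sum_sq_inner_single (a : E n) :
    ∑ i, ⟪a, EuclideanSpace.single i 1⟫ ^ 2 = ‖a‖ ^ 2 := by
  simpa [real_inner_comm] using (EuclideanSpace.basisFun (Fin n) ℝ).sum_sq_norm_inner_right a

end Operators

noncomputable section

namespace PoissonKernel

section Generic

variable {F : Type*} [NormedAddCommGroup F] (p q : ℝ) (ζ : F)

def weight (y : F) : ℝ := (1 - ‖y‖ ^ 2) ^ p * (‖y - ζ‖ ^ 2) ^ q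

lemma div_norm_rpow_eq_weight (m : ℝ) (y : F) :
    (1 - ‖y‖ ^ 2) ^ p / ‖y - ζ‖ ^ m = weight p (-m / 2) ζ y := by
  rw [weight, div_eq_mul_inv, ← Real.rpow_neg (norm_nonneg _), ← Real.rpow_natCast ‖y - ζ‖ 2,
    ← Real.rpow_mul (norm_nonneg _)]
  congr 2
  push_cast
  ring

variable [InnerProductSpace ℝ F]

def logGrad (y : F) : F := (-2 * p / (1 - ‖y‖ ^ 2)) • y + (2 * q / ‖y - ζ‖ ^ 2) • (y - ζ)

variable {p q ζ} {x : F}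

lemma hasFDerivAt_weight (hS : 1 - ‖x‖ ^ 2 ≠ 0) (hT : ‖x - ζ‖ ^ 2 ≠ 0) :
    HasFDerivAt (weight p q ζ) (weight p q ζ x • innerSL ℝ (logGrad p q ζ x)) x := by
  refine (((hasFDerivAt_one_sub_norm_sq x).rpow_const (Or.inl hS)).mul
    ((hasFDerivAt_norm_sub_sq ζ x).rpow_const (Or.inl hT))).congr_fderiv ?_
  ext u
  simp only [weight, logGrad, Real.rpow_sub_one hS, Real.rpow_sub_one hT, add_apply, sub_apply,
    neg_apply, smul_apply, coe_innerSL_apply, map_add, map_sub, map_smul, smul_add, smul_neg,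
    nsmul_eq_mul, Nat.cast_ofNat, smul_eq_mul, neg_mul]
  field_simp
  ring

lemma hasFDerivAt_inner_logGrad (v : F) (hS : 1 - ‖x‖ ^ 2 ≠ 0) (hT : ‖x - ζ‖ ^ 2 ≠ 0) :
    HasFDerivAt (fun y => ⟪logGrad p q ζ y, v⟫)
      ((2 * q / ‖x - ζ‖ ^ 2 - 2 * p / (1 - ‖x‖ ^ 2)) • innerSL ℝ v
        - (4 * p * ⟪x, v⟫ / (1 - ‖x‖ ^ 2) ^ 2) • innerSL ℝ x
        - (4 * q * ⟪x - ζ, v⟫ / (‖x - ζ‖ ^ 2) ^ 2) • innerSL ℝ (x - ζ)) x := by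
  have hSinv := (hasDerivAt_inv hS).comp_hasFDerivAt x (hasFDerivAt_one_sub_norm_sq x)
  have hTinv := (hasDerivAt_inv hT).comp_hasFDerivAt x (hasFDerivAt_norm_sub_sq ζ x)
  have hx : HasFDerivAt (fun y : F => ⟪y, v⟫) (innerSL ℝ v) x := by
    simpa [real_inner_comm] using (innerSL ℝ v).hasFDerivAt (x := x)
  have hxζ : HasFDerivAt (fun y : F => ⟪y - ζ, v⟫) (innerSL ℝ v) x := by
    simpa [inner_sub_left] using hx.sub_const ⟪ζ, v⟫
  have h := ((hSinv.const_mul (-2 * p)).mul hx).add ((hTinv.const_mul (2 * q)).mul hxζ)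
  refine (h.congr_fderiv ?_).congr_of_eventuallyEq ?_
  · have hT' : ‖x - ζ‖ ≠ 0 := fun h => hT (by simp [h])
    ext u
    simp only [Function.comp_apply, real_inner_comm, map_sub, add_apply, sub_apply, neg_apply,
      smul_apply, coe_innerSL_apply, neg_smul, smul_neg, neg_neg, smul_eq_mul, nsmul_eq_mul,
      Nat.cast_ofNat, neg_mul]
    field_simp
    ring
  · filter_upwards with y
    simp [logGrad, inner_add_left, inner_smul_left, div_eq_mul_inv]

lemma inner_logGrad_self : ⟪logGrad p q ζ x, x⟫ =
    -2 * p / (1 - ‖x‖ ^ 2) * ‖x‖ ^ 2 + 2 * q / ‖x - ζ‖ ^ 2 * ⟪x - ζ, x⟫ := by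
  simp only [logGrad, inner_add_left, inner_smul_left, real_inner_self_eq_norm_sq, conj_trivial]

lemma norm_logGrad_sq : ‖logGrad p q ζ x‖ ^ 2 = (-2 * p / (1 - ‖x‖ ^ 2)) ^ 2 * ‖x‖ ^ 2
    + 2 * (-2 * p / (1 - ‖x‖ ^ 2)) * (2 * q / ‖x - ζ‖ ^ 2) * ⟪x - ζ, x⟫
    + (2 * q / ‖x - ζ‖ ^ 2) ^ 2 * ‖x - ζ‖ ^ 2 := by
  rw [logGrad, norm_add_sq_real, norm_smul, norm_smul, inner_smul_left, inner_smul_right,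
    real_inner_comm x]
  simp only [Real.norm_eq_abs, mul_pow, sq_abs, conj_trivial]
  ring

end Generic

variable {n : ℕ} {p q : ℝ} {ζ x : E n}

lemma lap_weight (hS : 1 - ‖x‖ ^ 2 ≠ 0) (hT : ‖x - ζ‖ ^ 2 ≠ 0) :
    lap (fun y => (weight p q ζ y : ℂ)) x = (weight p q ζ x * (‖logGrad p q ζ x‖ ^ 2
      + n * (2 * q / ‖x - ζ‖ ^ 2 - 2 * p / (1 - ‖x‖ ^ 2))
      - 4 * p * ‖x‖ ^ 2 / (1 - ‖x‖ ^ 2) ^ 2 - 4 * q / ‖x - ζ‖ ^ 2) : ℝ) := by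
  have hD : ∀ᶠ y in 𝓝 x, HasFDerivAt (weight p q ζ)
      (weight p q ζ y • innerSL ℝ (logGrad p q ζ y)) y := by
    have hcont : Continuous fun y : E n => (1 - ‖y‖ ^ 2) * ‖y - ζ‖ ^ 2 := by fun_prop
    filter_upwards [hcont.continuousAt.eventually_ne (mul_ne_zero hS hT)] with y hy
    exact hasFDerivAt_weight (left_ne_zero_of_mul hy) (right_ne_zero_of_mul hy)
  rw [lap_ofReal_eq_sum hD fun v =>
    (hasFDerivAt_weight hS hT).mul (hasFDerivAt_inner_logGrad v hS hT)]
  congr 1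
  set S := 1 - ‖x‖ ^ 2
  set T := ‖x - ζ‖ ^ 2 with hT_def
  set g := logGrad p q ζ x
  calc _ = ∑ i : Fin n, weight p q ζ x * ((2 * q / T - 2 * p / S) * 1
        - 4 * p / S ^ 2 * ⟪x, EuclideanSpace.single i 1⟫ ^ 2
        - 4 * q / T ^ 2 * ⟪x - ζ, EuclideanSpace.single i 1⟫ ^ 2
        + ⟪g, EuclideanSpace.single i 1⟫ ^ 2) := by
          refine Finset.sum_congr rfl fun i _ => ?_
          simp only [add_apply, sub_apply, smul_apply, innerSL_apply_apply,
            ContinuousLinearMap.toLinearMap_innerSL_apply, innerₛₗ_apply_apply, inner_sub_left,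
            real_inner_self_eq_norm_sq, PiLp.norm_single, norm_one, one_pow, smul_eq_mul]
          ring
    _ = _ := by
      simp only [← Finset.mul_sum, Finset.sum_add_distrib, Finset.sum_sub_distrib,
        sum_sq_inner_single, ← hT_def, Finset.sum_const, Finset.card_univ, Fintype.card_fin,
        nsmul_eq_mul, mul_one]
      field_simp
      ring

lemma Lop_weight_eq_zero (θ : ℝ) (hζ : ‖ζ‖ = 1) (hx : ‖x‖ < 1) :
    Lop θ (fun y => (weight (1 + 2 * θ) (-(n + 2 * θ) / 2) ζ y : ℂ)) x = 0 := by
  have hS : 1 - ‖x‖ ^ 2 ≠ 0 := by nlinarith [norm_nonneg x]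
  have hxζ : ‖x - ζ‖ ≠ 0 := by
    rw [norm_ne_zero_iff, sub_ne_zero]
    rintro rfl
    exact hx.ne hζ
  rw [Lop, lap_weight hS (pow_ne_zero 2 hxζ),
    radialDeriv_ofReal (hasFDerivAt_weight hS (pow_ne_zero 2 hxζ))]
  simp only [smul_apply, innerSL_apply_apply, smul_eq_mul]
  suffices h : (1 - ‖x‖ ^ 2) * (‖logGrad (1 + 2 * θ) (-(n + 2 * θ) / 2) ζ x‖ ^ 2
      + n * (2 * (-(n + 2 * θ) / 2) / ‖x - ζ‖ ^ 2 - 2 * (1 + 2 * θ) / (1 - ‖x‖ ^ 2))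
      - 4 * (1 + 2 * θ) * ‖x‖ ^ 2 / (1 - ‖x‖ ^ 2) ^ 2 - 4 * (-(n + 2 * θ) / 2) / ‖x - ζ‖ ^ 2)
      + 4 * θ * ⟪logGrad (1 + 2 * θ) (-(n + 2 * θ) / 2) ζ x, x⟫
      + 2 * θ * (n - 2 - 2 * θ) = 0 by
    simp only [← Complex.ofReal_mul, ← Complex.ofReal_add, Complex.ofReal_eq_zero]
    linear_combination weight (1 + 2 * θ) (-(n + 2 * θ) / 2) ζ x * h
  rw [norm_logGrad_sq, inner_logGrad_self, inner_sub_self_eq_of_norm_eq_one hζ]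
  field_simp
  ring

end PoissonKernel

end

theorem stmt9_general (n : ℕ) (θ : ℝ) (ζ : E n) (hζ : ‖ζ‖ = 1) :
    (∀ x ∈ unitBall n,
      Lop θ (fun y => (((1 - ‖y‖ ^ 2) ^ (1 + 2 * θ) / ‖y - ζ‖ ^ ((n : ℝ) + 2 * θ) : ℝ) : ℂ))
        x = 0) ∧
    (∀ c : ℂ, ∀ x ∈ unitBall n,
      Lop θ
        (fun y => c * (((1 - ‖y‖ ^ 2) ^ (1 + 2 * θ) / ‖y - ζ‖ ^ ((n : ℝ) + 2 * θ) : ℝ) : ℂ))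
        x = 0) := by
  refine ⟨fun x hx => ?_, fun c x hx => ?_⟩
  · simp_rw [PoissonKernel.div_norm_rpow_eq_weight]
    exact PoissonKernel.Lop_weight_eq_zero θ hζ (mem_ball_zero_iff.mp hx)
  · simp_rw [Lop_const_mul, PoissonKernel.div_norm_rpow_eq_weight,
      PoissonKernel.Lop_weight_eq_zero θ hζ (mem_ball_zero_iff.mp hx), mul_zero]

/-- the generalized Poisson kernel `(1-|x|²)^{1+2θ}/|x-ζ|^{n+2θ}`
solves `L_θ[u] = 0`, as does any constant multiple of it. -/
theorem stmt9 (n : ℕ) (hn : 2 ≤ n) (θ : ℝ) (ζ : E n) (hζ : ‖ζ‖ = 1) :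
    (∀ x ∈ unitBall n,
      Lop θ (fun y => (((1 - ‖y‖ ^ 2) ^ (1 + 2 * θ) / ‖y - ζ‖ ^ ((n : ℝ) + 2 * θ) : ℝ) : ℂ))
        x = 0) ∧
    (∀ c : ℂ, ∀ x ∈ unitBall n,
      Lop θ
        (fun y => c * (((1 - ‖y‖ ^ 2) ^ (1 + 2 * θ) / ‖y - ζ‖ ^ ((n : ℝ) + 2 * θ) : ℝ) : ℂ))
        x = 0) :=
  stmt9_general n θ ζ hζ
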